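/- Let m, n, s be natural numbers and set r = |m − n| + 2s. Then Σ_{j+k = r+1, j,k ≥ 0} (−1)^j p_m^{(j)}(0) · p_n^{(k)}(0) = 0, where p^{(j)} denotes the j-th derivative. -/

import Mathlib

/-!
With `N = r + 1`, the sum is `W(0)` for `W = ∑ⱼ (-1)ʲ p_m⁽ʲ⁾ p_n⁽ᴺ⁻ʲ⁾`, whose derivative telescopes
to `p_m p_n⁽ᴺ⁺¹⁾ + (-1)ᴺ p_m⁽ᴺ⁺¹⁾ p_n`. Since `N ≥ |m - n|`, each of these products pairs a Legendre
polynomial with a polynomial of smaller degree, so by orthogonality on `[0, 1]` (integration by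
parts against Rodrigues' formula) `W(1) = W(0)`. On the other hand `p_k(1 - x) = (-1)ᵏ p_k(x)`
gives `W(1) = (-1)^(m + n + N) W(0) = -W(0)`, as `m + n + N` is odd.
-/

open MeasureTheory intervalIntegral

/-- Shifted Legendre polynomial `p n x = (1/n!) dⁿ/dxⁿ (xⁿ(x-1)ⁿ)`. -/
noncomputable def shiftedLegendre (n : ℕ) : ℝ → ℝ :=
  fun x => (1 / (Nat.factorial n) : ℝ) * iteratedDeriv n (fun t : ℝ => t ^ n * (t - 1) ^ n) x

namespace Polynomial

section CommRing

variable {R : Type*} [CommRing R]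

theorem eval_iterate_derivative_eq_zero_of_pow_dvd {p : R[X]} {a : R} {k i : ℕ}
    (h : (X - C a) ^ k ∣ p) (hi : i < k) : (derivative^[i] p).eval a = 0 :=
  dvd_iff_isRoot.mp <|
    (dvd_pow_self _ (Nat.sub_ne_zero_of_lt hi)).trans
      (pow_sub_dvd_iterate_derivative_of_pow_dvd i h)

theorem iterate_derivative_comp_one_sub_X_of_comp_eq {p : R[X]} {ε : R}
    (h : p.comp (1 - X) = C ε * p) (j : ℕ) :
    (derivative^[j] p).comp (1 - X) = (-1) ^ j * C ε * derivative^[j] p := by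
  have hj := iterate_derivative_comp_one_sub_X p j
  rw [h, iterate_derivative_C_mul] at hj
  rw [mul_assoc, hj, ← mul_assoc, ← mul_pow, neg_one_mul, neg_neg, one_pow, one_mul]

noncomputable def concomitant (N : ℕ) (f g : R[X]) : R[X] :=
  ∑ j ∈ Finset.range (N + 1), (-1) ^ j * (derivative^[j] f * derivative^[N - j] g)

theorem derivative_concomitant (N : ℕ) (f g : R[X]) :
    derivative (concomitant N f g) =
      f * derivative^[N + 1] g + (-1) ^ N * (derivative^[N + 1] f * g) := by
  set t : ℕ → R[X] := fun j => (-1) ^ j * (derivative^[j] f * derivative^[N + 1 - j] g)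
  have hstep : ∀ j ∈ Finset.range (N + 1), derivative
      ((-1) ^ j * (derivative^[j] f * derivative^[N - j] g)) = t j - t (j + 1) := by
    intro j hj
    have hjN : N + 1 - j = N - j + 1 := by grind
    simp only [t, hjN, Nat.reduceSubDiff, derivative_mul, derivative_pow, derivative_neg,
      derivative_one, Function.iterate_succ_apply']
    ring
  rw [concomitant, derivative_sum, Finset.sum_congr rfl hstep, Finset.sum_range_sub']
  simp only [t, pow_zero, one_mul, Function.iterate_zero_apply, Nat.sub_zero, Nat.sub_self]
  ring

theorem concomitant_comp_one_sub_X {f g : R[X]} {ε δ : R} (hf : f.comp (1 - X) = C ε * f)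
    (hg : g.comp (1 - X) = C δ * g) (N : ℕ) :
    (concomitant N f g).comp (1 - X) = (-1) ^ N * C (ε * δ) * concomitant N f g := by
  rw [concomitant, sum_comp, Finset.mul_sum]
  refine Finset.sum_congr rfl fun j hj => ?_
  have hsign : ((-1) ^ j * (-1) ^ (N - j) : R[X]) = (-1) ^ N := by
    rw [← pow_add, Nat.add_sub_cancel' (Finset.mem_range_succ_iff.mp hj)]
  simp only [mul_comp, pow_comp, neg_comp, one_comp, C_mul,
    iterate_derivative_comp_one_sub_X_of_comp_eq hf,
    iterate_derivative_comp_one_sub_X_of_comp_eq hg]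
  linear_combination (C ε * C δ * (-1) ^ j * derivative^[j] f * derivative^[N - j] g) * hsign

end CommRing

theorem integral_eval_derivative (p : ℝ[X]) (a b : ℝ) :
    ∫ x in a..b, (derivative p).eval x = p.eval b - p.eval a :=
  integral_eq_sub_of_hasDerivAt (fun x _ => p.hasDerivAt x)
    (p.derivative.continuous.intervalIntegrable _ _)

theorem integral_derivative_mul_eq_neg {f : ℝ[X]} {a b : ℝ} (ha : f.eval a = 0)
    (hb : f.eval b = 0) (g : ℝ[X]) :
    ∫ x in a..b, (derivative f * g).eval x = -∫ x in a..b, (f * derivative g).eval x := by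
  have h := integral_eval_derivative (f * g) a b
  simp only [derivative_mul, eval_add] at h
  rw [integral_add ((f.derivative * g).continuous.intervalIntegrable _ _)
    ((f * g.derivative).continuous.intervalIntegrable _ _)] at h
  simp only [eval_mul, ha, hb, zero_mul, sub_zero] at h ⊢
  linear_combination h

theorem integral_iterate_derivative_mul_eq {f : ℝ[X]} {a b : ℝ} {k : ℕ}
    (ha : ∀ i < k, (derivative^[i] f).eval a = 0) (hb : ∀ i < k, (derivative^[i] f).eval b = 0)
    (g : ℝ[X]) :
    ∫ x in a..b, (derivative^[k] f * g).eval x =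
      (-1) ^ k * ∫ x in a..b, (f * derivative^[k] g).eval x := by
  induction k generalizing g with
  | zero => simp
  | succ k ih =>
    rw [Function.iterate_succ_apply', integral_derivative_mul_eq_neg (ha k k.lt_succ_self)
      (hb k k.lt_succ_self), ih (fun i hi => ha i (hi.trans k.lt_succ_self))
      (fun i hi => hb i (hi.trans k.lt_succ_self)), ← Function.iterate_succ_apply, pow_succ]
    ring

theorem iteratedDeriv_eval {𝕜 : Type*} [NontriviallyNormedField 𝕜] (p : 𝕜[X]) (k : ℕ) :
    iteratedDeriv k (fun x => p.eval x) = fun x => (derivative^[k] p).eval x := by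
  induction k with
  | zero => simp
  | succ k ih =>
    ext x
    rw [iteratedDeriv_succ, ih, Function.iterate_succ_apply']
    exact Polynomial.deriv _

end Polynomial

section ShiftedLegendre

open Polynomial hiding shiftedLegendre

/-- Rodrigues' form of `shiftedLegendre n`. Mathlib's `Polynomial.shiftedLegendre n` is built from
`(1 - X)ⁿ` instead of `(X - 1)ⁿ` and so differs from it by the sign `(-1)ⁿ`. -/
noncomputable def shiftedLegendrePoly (n : ℕ) : ℝ[X] :=
  C (n.factorial : ℝ)⁻¹ * derivative^[n] (X ^ n * (X - 1) ^ n)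

theorem shiftedLegendre_eq_eval (n : ℕ) :
    shiftedLegendre n = fun x => (shiftedLegendrePoly n).eval x := by
  have h : (fun t : ℝ => t ^ n * (t - 1) ^ n) = fun t => (X ^ n * (X - 1) ^ n : ℝ[X]).eval t := by
    simp
  ext x
  simp [shiftedLegendre, shiftedLegendrePoly, h, iteratedDeriv_eval]

theorem natDegree_shiftedLegendrePoly_le (n : ℕ) : (shiftedLegendrePoly n).natDegree ≤ n := by
  have h : (X ^ n * (X - 1) ^ n : ℝ[X]).natDegree ≤ 2 * n := by
    refine natDegree_mul_le.trans ?_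
    have := natDegree_pow_le_of_le n (natDegree_X_sub_C_le (1 : ℝ))
    rw [map_one] at this
    rw [natDegree_X_pow]
    omega
  calc (shiftedLegendrePoly n).natDegree
      ≤ (derivative^[n] (X ^ n * (X - 1) ^ n : ℝ[X])).natDegree := natDegree_C_mul_le _ _
    _ ≤ (X ^ n * (X - 1) ^ n : ℝ[X]).natDegree - n := natDegree_iterate_derivative _ _
    _ ≤ n := by omega

theorem iterate_derivative_shiftedLegendrePoly_eq_zero {n j : ℕ} (h : n < j) :
    derivative^[j] (shiftedLegendrePoly n) = 0 :=
  iterate_derivative_eq_zero ((natDegree_shiftedLegendrePoly_le n).trans_lt h)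

theorem shiftedLegendrePoly_comp_one_sub_X (n : ℕ) :
    (shiftedLegendrePoly n).comp (1 - X) = C ((-1) ^ n) * shiftedLegendrePoly n := by
  have h : (X ^ n * (X - 1) ^ n : ℝ[X]).comp (1 - X) = C 1 * (X ^ n * (X - 1) ^ n) := by
    simp only [mul_comp, pow_comp, X_comp, sub_comp, one_comp, map_one, one_mul, ← mul_pow]
    ring
  rw [shiftedLegendrePoly, mul_comp, C_comp, iterate_derivative_comp_one_sub_X_of_comp_eq h]
  simp only [map_one, mul_one, map_pow, map_neg]
  ring

theorem integral_shiftedLegendrePoly_mul_eq_zero {n : ℕ} {q : ℝ[X]}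
    (hq : derivative^[n] q = 0) :
    ∫ x in (0 : ℝ)..1, (shiftedLegendrePoly n * q).eval x = 0 := by
  have hdvd0 : (X - C 0) ^ n ∣ (X ^ n * (X - 1) ^ n : ℝ[X]) := by simp
  have hdvd1 : (X - C 1) ^ n ∣ (X ^ n * (X - 1) ^ n : ℝ[X]) := by simp
  rw [shiftedLegendrePoly, mul_assoc]
  simp only [eval_mul (p := C _), eval_C, intervalIntegral.integral_const_mul]
  rw [integral_iterate_derivative_mul_eq
    (fun i hi => eval_iterate_derivative_eq_zero_of_pow_dvd hdvd0 hi)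
    (fun i hi => eval_iterate_derivative_eq_zero_of_pow_dvd hdvd1 hi), hq]
  simp

theorem integral_shiftedLegendrePoly_mul_iterate_derivative_eq_zero {m n N : ℕ}
    (h : n ≤ m + N) :
    ∫ x in (0 : ℝ)..1, (shiftedLegendrePoly m * derivative^[N + 1] (shiftedLegendrePoly n)).eval x
      = 0 := by
  refine integral_shiftedLegendrePoly_mul_eq_zero ?_
  rw [← Function.iterate_add_apply]
  exact iterate_derivative_shiftedLegendrePoly_eq_zero (by omega)

theorem eval_zero_concomitant_shiftedLegendrePoly_eq_zero {m n N : ℕ} (hm : n ≤ m + N)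
    (hn : m ≤ n + N) (hodd : Odd (m + n + N)) :
    (concomitant N (shiftedLegendrePoly m) (shiftedLegendrePoly n)).eval 0 = 0 := by
  set W := concomitant N (shiftedLegendrePoly m) (shiftedLegendrePoly n)
  have hends : W.eval 1 = W.eval 0 := by
    have h := integral_eval_derivative W 0 1
    rw [derivative_concomitant] at h
    simp only [eval_add, eval_mul (p := (-1) ^ N), eval_pow, eval_neg, eval_one] at h
    rw [intervalIntegral.integral_add (Continuous.intervalIntegrable (by fun_prop) _ _)
      (Continuous.intervalIntegrable (by fun_prop) _ _), intervalIntegral.integral_const_mul,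
      integral_shiftedLegendrePoly_mul_iterate_derivative_eq_zero hm] at h
    simp only [mul_comm (derivative^[N + 1] _),
      integral_shiftedLegendrePoly_mul_iterate_derivative_eq_zero hn, mul_zero, add_zero] at h
    linarith
  have hreflect : W.eval 1 = -W.eval 0 := by
    have h := congrArg (eval 0) <| concomitant_comp_one_sub_X
      (shiftedLegendrePoly_comp_one_sub_X m) (shiftedLegendrePoly_comp_one_sub_X n) N
    simp only [eval_comp, eval_sub, eval_one, eval_X, sub_zero, eval_mul, eval_pow, eval_neg,
      eval_C, ← pow_add] at h
    rw [h, show N + (m + n) = m + n + N by ring, hodd.neg_one_pow, neg_one_mul]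
  linarith

end ShiftedLegendre

theorem stmt13 (m n s : ℕ) :
    ∑ j ∈ Finset.range (((m : ℤ) - n).natAbs + 2 * s + 2),
        (-1 : ℝ) ^ j * iteratedDeriv j (shiftedLegendre m) 0 *
          iteratedDeriv ((((m : ℤ) - n).natAbs + 2 * s + 1) - j) (shiftedLegendre n) 0 = 0 := by
  set N := ((m : ℤ) - n).natAbs + 2 * s + 1
  have h := eval_zero_concomitant_shiftedLegendrePoly_eq_zero (m := m) (n := n) (N := N)
    (by omega) (by omega) (by rw [Nat.odd_iff]; omega)
  simp only [Polynomial.concomitant, Polynomial.eval_finsetSum, Polynomial.eval_mul,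
    Polynomial.eval_pow, Polynomial.eval_neg, Polynomial.eval_one] at h
  simpa only [shiftedLegendre_eq_eval, Polynomial.iteratedDeriv_eval, mul_assoc] using h
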